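/- arXiv:2001.03733 — 2 statements merged into one kernel-verified Lean document; each statement's English description precedes it below -/
import Mathlib

section
/- Let α > 0, a ≥ 0, b ≥ 0 be real numbers and let ξ be a nonnegative Borel measure on (0,∞) satisfying ∫₀^∞ min(t,1) ξ(dt) < ∞. Define Δ : (0,∞) → ℝ by Δ(x) = e^{αx}(a + bx) + ∫₀^∞ (e^{αx} − e^{−x(t−α)}) ξ(dt). If moreover a > 0, or b > 0, or ξ is not the zero measure, then Δ is three times differentiable on (0,∞), the third derivative Δ''' is strictly positive on (0,∞), and consequently the derivative Δ' is strictly convex on (0,∞). -/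
open MeasureTheory Real Set
open scoped Nat

/-! Writing `e^{αx} - e^{-x(t-α)} = e^{αx} - e^{(α-t)x}`, its `k`-th derivative in `x` is
`α^k e^{αx} - (α-t)^k e^{(α-t)x}`, which for `x` in a compact subset of `(0,∞)` is bounded by a
constant times `min t 1`; so `Δ` may be differentiated under the integral sign as often as we like.
For `k = 3` the integrand is positive when `t > 0`: either `α - t ≤ 0`, or `0 < α - t < α` and
`c ↦ c³ e^{cx}` is increasing for `c > 0`. The third derivative of `e^{αx}(a + bx)` is
`e^{αx}(α³(a + bx) + 3α²b) ≥ 0`, with strict inequality unless `a = b = 0`. Hence `Δ''' > 0`,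
which gives strict convexity of `Δ'`. -/

lemma iterate_deriv_eqOn {U : Set ℝ} (hU : IsOpen U) {g : ℕ → ℝ → ℝ}
    (hg : ∀ k, ∀ x ∈ U, HasDerivAt (g k) (g (k + 1) x) x) (k : ℕ) :
    EqOn (deriv^[k] (g 0)) (g k) U := by
  induction k with
  | zero => exact fun _ _ => rfl
  | succ k ih =>
    intro x hx
    rw [Function.iterate_succ_apply', (ih.eventuallyEq_of_mem (hU.mem_nhds hx)).deriv_eq]
    exact (hg k x hx).deriv

lemma hasDerivAt_iterate_deriv {U : Set ℝ} (hU : IsOpen U) {g : ℕ → ℝ → ℝ}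
    (hg : ∀ k, ∀ x ∈ U, HasDerivAt (g k) (g (k + 1) x) x) (k : ℕ) {x : ℝ} (hx : x ∈ U) :
    HasDerivAt (deriv^[k] (g 0)) (g (k + 1) x) x :=
  (hg k x hx).congr_of_eventuallyEq
    ((iterate_deriv_eqOn hU hg k).eventuallyEq_of_mem (hU.mem_nhds hx))

lemma pow_mul_exp_neg_mul_le {l y : ℝ} (hl : 0 < l) (hy : 0 ≤ y) (m : ℕ) :
    y ^ m * exp (-(l * y)) ≤ m ! / l ^ m := by
  have h := pow_div_factorial_le_exp (l * y) (by positivity) m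
  rw [exp_neg, ← div_eq_mul_inv, div_le_div_iff₀ (exp_pos _) (by positivity)]
  rw [div_le_iff₀ (by positivity), mul_pow] at h
  linarith

lemma mul_pow_mul_exp_neg_mul_le {c l t : ℝ} (hc : 0 ≤ c) (hl : 0 < l) (ht : 0 ≤ t) (m : ℕ) :
    t * (c + t) ^ m * exp (-(l * t)) ≤ exp (l * (c + 1)) * ((m + 1) ! / l ^ (m + 1)) * min t 1 := by
  set s := c + 1 + t
  have hts : t ≤ min t 1 * s :=
    calc t = min t 1 * max t 1 := by rw [min_mul_max, mul_one]
      _ ≤ min t 1 * s := by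
        gcongr
        exact max_le (by linarith) (by linarith)
  have hexp : exp (-(l * t)) = exp (l * (c + 1)) * exp (-(l * s)) := by
    rw [← exp_add]; congr 1; ring
  calc t * (c + t) ^ m * exp (-(l * t))
      ≤ min t 1 * s * s ^ m * exp (-(l * t)) := by gcongr; linarith
    _ = exp (l * (c + 1)) * (s ^ (m + 1) * exp (-(l * s))) * min t 1 := by rw [hexp]; ring
    _ ≤ exp (l * (c + 1)) * ((m + 1) ! / l ^ (m + 1)) * min t 1 := by
      gcongr
      exact pow_mul_exp_neg_mul_le hl (by positivity) _

lemma one_sub_exp_neg_mul_le {x t : ℝ} (ht : 0 ≤ t) :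
    1 - exp (-(x * t)) ≤ max x 1 * min t 1 := by
  rcases le_total t 1 with h | h
  · rw [min_eq_left h]
    nlinarith [one_sub_le_exp_neg (x * t), le_max_left x 1]
  · rw [min_eq_right h, mul_one]
    linarith [exp_pos (-(x * t)), le_max_right x 1]

lemma abs_pow_sub_pow_sub_le {α t : ℝ} (hα : 0 ≤ α) (ht : 0 ≤ t) (k : ℕ) :
    |α ^ k - (α - t) ^ k| ≤ k * (t * (α + t) ^ (k - 1)) := by
  refine (abs_pow_sub_pow_le _ _ _).trans ?_
  rw [sub_sub_cancel, abs_of_nonneg ht, abs_of_nonneg hα]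
  have : max α |α - t| ≤ α + t := max_le (by linarith) (abs_sub_le_iff.2 ⟨by linarith, by linarith⟩)
  calc t * k * max α |α - t| ^ (k - 1) ≤ t * k * (α + t) ^ (k - 1) := by gcongr
    _ = k * (t * (α + t) ^ (k - 1)) := by ring

noncomputable def expKernelDeriv (α : ℝ) (k : ℕ) (x t : ℝ) : ℝ :=
  α ^ k * exp (α * x) - (α - t) ^ k * exp ((α - t) * x)

lemma expKernelDeriv_eq (α : ℝ) (k : ℕ) (x t : ℝ) :
    expKernelDeriv α k x t =
      exp (α * x) * (α ^ k * (1 - exp (-(x * t))) + (α ^ k - (α - t) ^ k) * exp (-(x * t))) := by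
  rw [expKernelDeriv, show (α - t) * x = α * x + -(x * t) by ring, exp_add]
  ring

lemma exists_abs_expKernelDeriv_le {α l u : ℝ} (hα : 0 ≤ α) (hl : 0 < l) (k : ℕ) :
    ∃ C, ∀ x ∈ Icc l u, ∀ t, 0 ≤ t → |expKernelDeriv α k x t| ≤ C * min t 1 := by
  set K := exp (l * (α + 1)) * (k ! / l ^ k)
  refine ⟨exp (α * u) * (α ^ k * max u 1 + k * K), fun x ⟨hlx, hxu⟩ t ht => ?_⟩
  have hx : 0 ≤ x := hl.le.trans hlx
  have hmin : 0 ≤ min t 1 := le_min ht zero_le_one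
  have h₁ : α ^ k * (1 - exp (-(x * t))) ≤ α ^ k * max u 1 * min t 1 := by
    rw [mul_assoc]
    gcongr
    exact (one_sub_exp_neg_mul_le ht).trans (by gcongr)
  have h₂ : |α ^ k - (α - t) ^ k| * exp (-(x * t)) ≤ k * K * min t 1 := by
    rcases k.eq_zero_or_pos with rfl | hk
    · simp
    have hK := mul_pow_mul_exp_neg_mul_le hα hl ht (k - 1)
    rw [Nat.sub_add_cancel hk] at hK
    calc |α ^ k - (α - t) ^ k| * exp (-(x * t))
        ≤ k * (t * (α + t) ^ (k - 1)) * exp (-(l * t)) := by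
          gcongr
          exact abs_pow_sub_pow_sub_le hα ht k
      _ ≤ k * K * min t 1 := by rw [mul_assoc, mul_assoc (k : ℝ)]; gcongr
  rw [expKernelDeriv_eq, abs_mul, abs_exp]
  calc exp (α * x) * |α ^ k * (1 - exp (-(x * t))) + (α ^ k - (α - t) ^ k) * exp (-(x * t))|
      ≤ exp (α * u) * (α ^ k * (1 - exp (-(x * t))) + |α ^ k - (α - t) ^ k| * exp (-(x * t))) := by
        gcongr
        refine (abs_add_le _ _).trans_eq ?_
        rw [abs_mul, abs_mul, abs_exp, abs_of_nonneg (by positivity),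
          abs_of_nonneg (by linarith [exp_le_one_iff.2 (neg_nonpos.2 (mul_nonneg hx ht))])]
    _ ≤ exp (α * u) * (α ^ k * max u 1 * min t 1 + k * K * min t 1) := by gcongr
    _ = exp (α * u) * (α ^ k * max u 1 + k * K) * min t 1 := by ring

lemma hasDerivAt_expKernelDeriv (α : ℝ) (k : ℕ) (x t : ℝ) :
    HasDerivAt (fun x => expKernelDeriv α k x t) (expKernelDeriv α (k + 1) x t) x := by
  have hexp (c : ℝ) : HasDerivAt (fun x => exp (c * x)) (exp (c * x) * c) x := by
    simpa using ((hasDerivAt_id x).const_mul c).exp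
  refine (((hexp α).const_mul (α ^ k)).sub ((hexp (α - t)).const_mul ((α - t) ^ k))).congr_deriv ?_
  rw [expKernelDeriv]
  ring

lemma continuous_expKernelDeriv (α : ℝ) (k : ℕ) (x : ℝ) : Continuous (expKernelDeriv α k x) := by
  unfold expKernelDeriv
  fun_prop

lemma expKernelDeriv_pos {α x t : ℝ} {k : ℕ} (hk : Odd k) (hα : 0 < α) (hx : 0 < x) (ht : 0 < t) :
    0 < expKernelDeriv α k x t := by
  rw [expKernelDeriv, sub_pos]
  rcases le_or_gt α t with hαt | hαt
  · calc (α - t) ^ k * exp ((α - t) * x) ≤ 0 :=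
          mul_nonpos_of_nonpos_of_nonneg (hk.pow_nonpos (by linarith)) (exp_pos _).le
      _ < α ^ k * exp (α * x) := by positivity
  · calc (α - t) ^ k * exp ((α - t) * x) < α ^ k * exp ((α - t) * x) := by
          gcongr ?_ * _
          exact pow_lt_pow_left₀ (by linarith) (by linarith) hk.pos.ne'
      _ ≤ α ^ k * exp (α * x) := by gcongr; linarith

section Integral

variable {α : ℝ} {ξ : Measure ℝ}

lemma integrable_expKernelDeriv (hα : 0 ≤ α) (hξ : ∀ᵐ t ∂ξ, 0 < t)
    (hint : Integrable (fun t => min t 1) ξ) (k : ℕ) {x : ℝ} (hx : 0 < x) :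
    Integrable (expKernelDeriv α k x) ξ := by
  obtain ⟨C, hC⟩ := exists_abs_expKernelDeriv_le (u := x) hα hx k
  refine (hint.const_mul C).mono' (continuous_expKernelDeriv α k x).aestronglyMeasurable ?_
  filter_upwards [hξ] with t ht
  exact hC x ⟨le_rfl, le_rfl⟩ t ht.le

lemma hasDerivAt_integral_expKernelDeriv (hα : 0 ≤ α) (hξ : ∀ᵐ t ∂ξ, 0 < t)
    (hint : Integrable (fun t => min t 1) ξ) (k : ℕ) {x₀ : ℝ} (hx₀ : 0 < x₀) :
    HasDerivAt (fun x => ∫ t, expKernelDeriv α k x t ∂ξ) (∫ t, expKernelDeriv α (k + 1) x₀ t ∂ξ)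
      x₀ := by
  obtain ⟨C, hC⟩ := exists_abs_expKernelDeriv_le (u := 2 * x₀) hα (half_pos hx₀) (k + 1)
  refine (hasDerivAt_integral_of_dominated_loc_of_deriv_le (bound := fun t => C * min t 1)
    (Icc_mem_nhds (half_lt_self hx₀) (by linarith : x₀ < 2 * x₀))
    (.of_forall fun x => (continuous_expKernelDeriv α k x).aestronglyMeasurable)
    (integrable_expKernelDeriv hα hξ hint k hx₀)
    (continuous_expKernelDeriv α (k + 1) x₀).aestronglyMeasurable ?_ (hint.const_mul C)
    (.of_forall fun t x _ => hasDerivAt_expKernelDeriv α k x t)).2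
  filter_upwards [hξ] with t ht x hx
  exact hC x hx t ht.le

lemma integral_expKernelDeriv_nonneg {k : ℕ} (hk : Odd k) (hα : 0 < α) (hξ : ∀ᵐ t ∂ξ, 0 < t)
    {x : ℝ} (hx : 0 < x) : 0 ≤ ∫ t, expKernelDeriv α k x t ∂ξ :=
  integral_nonneg_of_ae (hξ.mono fun _ ht => (expKernelDeriv_pos hk hα hx ht).le)

lemma integral_expKernelDeriv_pos {k : ℕ} (hk : Odd k) (hα : 0 < α) (hξ : ∀ᵐ t ∂ξ, 0 < t)
    (hint : Integrable (fun t => min t 1) ξ) (hξ₀ : ξ ≠ 0) {x : ℝ} (hx : 0 < x) :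
    0 < ∫ t, expKernelDeriv α k x t ∂ξ := by
  have hpos : ∀ᵐ t ∂ξ, 0 < expKernelDeriv α k x t :=
    hξ.mono fun _ ht => expKernelDeriv_pos hk hα hx ht
  rw [integral_pos_iff_support_of_nonneg_ae (hpos.mono fun t ht => ht.le)
    (integrable_expKernelDeriv hα.le hξ hint k hx)]
  have hsupp : Function.support (expKernelDeriv α k x) =ᵐ[ξ] univ :=
    ae_eq_univ.2 (ae_iff.1 (hpos.mono fun t ht => ht.ne'))
  rw [measure_congr hsupp]
  exact Measure.measure_univ_pos.2 hξ₀

end Integral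

noncomputable def expLinearDeriv (α a b : ℝ) (k : ℕ) (x : ℝ) : ℝ :=
  exp (α * x) * (α ^ k * (a + b * x) + k * α ^ (k - 1) * b)

lemma hasDerivAt_expLinearDeriv (α a b : ℝ) (k : ℕ) (x : ℝ) :
    HasDerivAt (expLinearDeriv α a b k) (expLinearDeriv α a b (k + 1) x) x := by
  have hexp : HasDerivAt (fun x => exp (α * x)) (exp (α * x) * α) x := by
    simpa using ((hasDerivAt_id x).const_mul α).exp
  have hlin : HasDerivAt (fun x => α ^ k * (a + b * x) + k * α ^ (k - 1) * b) (α ^ k * b) x := by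
    simpa using (((hasDerivAt_id x).const_mul b).const_add a).const_mul (α ^ k)
  refine (hexp.mul hlin).congr_deriv ?_
  rcases k with _ | k
  · simp [expLinearDeriv]; ring
  · simp only [expLinearDeriv, Nat.add_sub_cancel]
    push_cast
    ring

lemma expLinearDeriv_nonneg {α a b x : ℝ} (hα : 0 ≤ α) (ha : 0 ≤ a) (hb : 0 ≤ b) (hx : 0 ≤ x)
    (k : ℕ) : 0 ≤ expLinearDeriv α a b k x := by
  unfold expLinearDeriv
  positivity

lemma expLinearDeriv_pos {α a b x : ℝ} (hα : 0 < α) (ha : 0 ≤ a) (hb : 0 ≤ b) (hx : 0 < x)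
    (hab : 0 < a ∨ 0 < b) (k : ℕ) : 0 < expLinearDeriv α a b k x := by
  have : 0 < a + b * x := by rcases hab with h | h <;> positivity
  unfold expLinearDeriv
  positivity

/-- Bernstein-type representation `Δ(x) = e^{αx}(a+bx) + ∫ (e^{αx} - e^{-x(t-α)}) ξ(dt)`
with `α > 0`, `a, b ≥ 0`, `ξ` a nonnegative measure on `(0,∞)` with `∫ min(t,1) ξ(dt) < ∞`.
If `a > 0`, `b > 0` or `ξ ≠ 0`, then `Δ` is three times differentiable on `(0,∞)`,
`Δ'''` is strictly positive there, and `Δ'` is strictly convex on `(0,∞)`. -/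
theorem stmt_0 (α a b : ℝ) (hα : 0 < α) (ha : 0 ≤ a) (hb : 0 ≤ b)
    (ξ : Measure ℝ) (hsupp : ξ (Set.Ioi (0 : ℝ))ᶜ = 0)
    (hint : Integrable (fun t => min t 1) ξ)
    (hnd : 0 < a ∨ 0 < b ∨ ξ ≠ 0)
    (Δ : ℝ → ℝ)
    (hΔ : ∀ x : ℝ, Δ x = Real.exp (α * x) * (a + b * x)
        + ∫ t, (Real.exp (α * x) - Real.exp (-x * (t - α))) ∂ξ) :
    (∀ x ∈ Set.Ioi (0 : ℝ), DifferentiableAt ℝ Δ x ∧ DifferentiableAt ℝ (deriv Δ) x ∧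
      DifferentiableAt ℝ (deriv (deriv Δ)) x) ∧
    (∀ x ∈ Set.Ioi (0 : ℝ), 0 < deriv (deriv (deriv Δ)) x) ∧
    StrictConvexOn ℝ (Set.Ioi (0 : ℝ)) (deriv Δ) := by
  have hξ : ∀ᵐ t ∂ξ, 0 < t := hsupp
  set g : ℕ → ℝ → ℝ := fun k x => expLinearDeriv α a b k x + ∫ t, expKernelDeriv α k x t ∂ξ
  have hΔg : Δ = g 0 := funext fun x => by
    simp only [hΔ, g, expLinearDeriv, expKernelDeriv, pow_zero, one_mul, Nat.cast_zero, zero_mul,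
      add_zero, show ∀ t, -x * (t - α) = (α - t) * x from fun t => by ring]
  have hg k : ∀ x ∈ Ioi 0, HasDerivAt (g k) (g (k + 1) x) x := fun x hx =>
    (hasDerivAt_expLinearDeriv α a b k x).add
      (hasDerivAt_integral_expKernelDeriv hα.le hξ hint k hx)
  have hg₃ : ∀ x ∈ Ioi 0, 0 < g 3 x := fun x hx => by
    have h3 : Odd 3 := by decide
    rcases or_assoc.2 hnd with hab | hξ₀
    · exact add_pos_of_pos_of_nonneg (expLinearDeriv_pos hα ha hb hx hab 3)
        (integral_expKernelDeriv_nonneg h3 hα hξ hx)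
    · exact add_pos_of_nonneg_of_pos (expLinearDeriv_nonneg hα.le ha hb (le_of_lt hx) 3)
        (integral_expKernelDeriv_pos h3 hα hξ hint hξ₀ hx)
  subst hΔg
  have hd := hasDerivAt_iterate_deriv isOpen_Ioi hg
  have hd₃ : ∀ x ∈ Ioi 0, 0 < deriv^[3] (g 0) x := fun x hx =>
    (hg₃ x hx).trans_eq (iterate_deriv_eqOn isOpen_Ioi hg 3 hx).symm
  refine ⟨fun x hx => ⟨(hd 0 hx).differentiableAt, (hd 1 hx).differentiableAt,
    (hd 2 hx).differentiableAt⟩, hd₃, ?_⟩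
  exact strictConvexOn_of_deriv2_pos' (convex_Ioi 0)
    (fun x hx => (hd 1 hx).continuousAt.continuousWithinAt) hd₃
end

section
/- Let a* > 0 and let F : [0, a*] → ℝ be three times differentiable with F'(a*) = 1 and F''(a*) = 0. Suppose that for every x ∈ [0, a*], if F''(x) = 0 and F'(x) > 0, then F'''(x) > 0. Then F''(x) < 0 and F'(x) > 1 for all x ∈ [0, a*). -/
open Set Filter Topology

/-- verification argument below the barrier.  If `F` is three times
differentiable on `[0, a*]`, `F'(a*) = 1`, `F''(a*) = 0`, and `F'''(x) > 0` whenever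
`F''(x) = 0` and `F'(x) > 0` on `[0, a*]`, then `F''(x) < 0` and `F'(x) > 1` for all
`x ∈ [0, a*)`. -/
theorem stmt_7 (astar : ℝ) (hastar : 0 < astar)
    (F F' F'' F''' : ℝ → ℝ)
    (hF1 : ∀ x ∈ Set.Icc 0 astar, HasDerivWithinAt F (F' x) (Set.Icc 0 astar) x)
    (hF2 : ∀ x ∈ Set.Icc 0 astar, HasDerivWithinAt F' (F'' x) (Set.Icc 0 astar) x)
    (hF3 : ∀ x ∈ Set.Icc 0 astar, HasDerivWithinAt F'' (F''' x) (Set.Icc 0 astar) x)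
    (hFa1 : F' astar = 1) (hFa2 : F'' astar = 0)
    (hkey : ∀ x ∈ Set.Icc 0 astar, F'' x = 0 → 0 < F' x → 0 < F''' x) :
    ∀ x ∈ Set.Ico 0 astar, F'' x < 0 ∧ 1 < F' x := by
  have hcF'' : ContinuousOn F'' (Icc 0 astar) := fun x hx => (hF3 x hx).continuousWithinAt
  have hcF' : ContinuousOn F' (Icc 0 astar) := fun x hx => (hF2 x hx).continuousWithinAt
  have hmem_astar : astar ∈ Icc 0 astar := ⟨hastar.le, le_refl _⟩
  have slope_lemma : ∀ x ∈ Icc 0 astar,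
      Tendsto (slope F'' x) (𝓝[Icc 0 astar \ {x}] x) (𝓝 (F''' x)) :=
    fun x hx => hasDerivWithinAt_iff_tendsto_slope.mp (hF3 x hx)
  -- F''' astar > 0
  have hpos_astar : 0 < F''' astar := hkey astar hmem_astar hFa2 (by rw [hFa1]; norm_num)
  -- slope tendsto from the left at astar
  have h1 : Tendsto (slope F'' astar) (𝓝[<] astar) (𝓝 (F''' astar)) := by
    refine (slope_lemma astar hmem_astar).mono_left ?_
    rw [← nhdsWithin_Ioo_eq_nhdsLT hastar]
    exact nhdsWithin_mono _ (fun y hy => ⟨⟨hy.1.le, hy.2.le⟩, ne_of_lt hy.2⟩)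
  have hev2 : ∀ᶠ y in 𝓝[<] astar, F'' y < 0 := by
    filter_upwards [h1.eventually (eventually_gt_nhds hpos_astar), self_mem_nhdsWithin]
      with y hy hy'
    rw [slope_def_field, hFa2, sub_zero] at hy
    rcases div_pos_iff.mp hy with ⟨_, h2⟩ | ⟨h1', _⟩
    · exfalso; simp only [mem_Iio] at hy'; linarith
    · linarith
  obtain ⟨l, hl, hnear⟩ := mem_nhdsLT_iff_exists_Ioo_subset.mp hev2
  simp only [mem_Iio] at hl
  have hnear' : ∀ y ∈ Ioo l astar, F'' y < 0 := fun y hy => hnear hy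
  -- main claim
  have key : ∀ x ∈ Ico 0 astar, F'' x < 0 := by
    by_contra hcon
    push_neg at hcon
    obtain ⟨x0, hx0, hx0'⟩ := hcon
    set S := {x : ℝ | x ∈ Icc 0 astar ∧ 0 ≤ F'' x ∧ x < astar} with hS
    have hx0S : x0 ∈ S := ⟨⟨hx0.1, hx0.2.le⟩, hx0', hx0.2⟩
    have hSne : S.Nonempty := ⟨x0, hx0S⟩
    have hSb : ∀ x ∈ S, x ≤ max l 0 := by
      intro x hx
      by_contra hc
      push_neg at hc
      exact absurd (hnear' x ⟨lt_of_le_of_lt (le_max_left l 0) hc, hx.2.2⟩)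
        (not_lt.mpr hx.2.1)
    have hbdd : BddAbove S := ⟨max l 0, hSb⟩
    set b := sSup S with hb
    have hb_lt : b < astar := lt_of_le_of_lt (csSup_le hSne hSb) (max_lt hl hastar)
    have hb_ge0 : 0 ≤ b := le_trans hx0.1 (le_csSup hbdd hx0S)
    have hbIcc : b ∈ Icc 0 astar := ⟨hb_ge0, hb_lt.le⟩
    -- F'' b ≥ 0
    have hT : IsClosed (Icc 0 astar ∩ F'' ⁻¹' (Ici 0)) :=
      hcF''.preimage_isClosed_of_isClosed isClosed_Icc isClosed_Ici
    have hST : S ⊆ Icc 0 astar ∩ F'' ⁻¹' (Ici 0) := fun x hx => ⟨hx.1, hx.2.1⟩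
    have hbcl : b ∈ closure S := csSup_mem_closure hSne hbdd
    have hFb_ge : 0 ≤ F'' b :=
      (hT.closure_subset_iff.mpr hST hbcl).2
    -- F'' < 0 on (b, astar)
    have hneg : ∀ y ∈ Ioo b astar, F'' y < 0 := by
      intro y hy
      by_contra hc
      push_neg at hc
      have hyS : y ∈ S := ⟨⟨le_trans hb_ge0 hy.1.le, hy.2.le⟩, hc, hy.2⟩
      exact absurd (le_csSup hbdd hyS) (not_le.mpr hy.1)
    -- F'' b ≤ 0
    haveI : (𝓝[Ioo b astar] b).NeBot := by
      rw [nhdsWithin_Ioo_eq_nhdsGT hb_lt]; infer_instance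
    have htend : Tendsto F'' (𝓝[Ioo b astar] b) (𝓝 (F'' b)) :=
      (hcF'' b hbIcc).mono (fun y hy => ⟨le_trans hb_ge0 hy.1.le, hy.2.le⟩)
    have hFb_le : F'' b ≤ 0 :=
      le_of_tendsto htend (eventually_mem_nhdsWithin.mono fun y hy => (hneg y hy).le)
    have hFb : F'' b = 0 := le_antisymm hFb_le hFb_ge
    -- F' b > 0 via strict antitonicity on [b, astar]
    have hanti : StrictAntiOn F' (Icc b astar) := by
      refine strictAntiOn_of_deriv_neg (convex_Icc b astar)
        (hcF'.mono (Icc_subset_Icc hb_ge0 le_rfl)) ?_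
      intro x hx
      rw [interior_Icc] at hx
      have hxI : x ∈ Ioo (0:ℝ) astar := ⟨lt_of_le_of_lt hb_ge0 hx.1, hx.2⟩
      have hda : HasDerivAt F' (F'' x) x :=
        (hF2 x ⟨hxI.1.le, hxI.2.le⟩).hasDerivAt (Icc_mem_nhds hxI.1 hxI.2)
      rw [hda.deriv]
      exact hneg x hx
    have hF'b : 0 < F' b := by
      have := hanti ⟨le_rfl, hb_lt.le⟩ ⟨hb_lt.le, le_rfl⟩ hb_lt
      rw [hFa1] at this; linarith
    have hF'''b : 0 < F''' b := hkey b hbIcc hFb hF'b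
    -- slope from the right at b
    have h2 : Tendsto (slope F'' b) (𝓝[>] b) (𝓝 (F''' b)) := by
      refine (slope_lemma b hbIcc).mono_left ?_
      rw [← nhdsWithin_Ioo_eq_nhdsGT hb_lt]
      exact nhdsWithin_mono _ (fun y hy => ⟨⟨le_trans hb_ge0 hy.1.le, hy.2.le⟩, ne_of_gt hy.1⟩)
    have hev3 : ∀ᶠ y in 𝓝[>] b, 0 < slope F'' b y :=
      h2.eventually (eventually_gt_nhds hF'''b)
    have hev4 : ∀ᶠ y in 𝓝[>] b, y ∈ Ioo b astar :=
      eventually_of_mem (Ioo_mem_nhdsGT_of_mem ⟨le_rfl, hb_lt⟩) (fun y hy => hy)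
    obtain ⟨y, hy1, hy2⟩ := (hev3.and hev4).exists
    rw [slope_def_field, hFb, sub_zero] at hy1
    have hyb : 0 < y - b := sub_pos.mpr hy2.1
    have : 0 < F'' y := by
      rcases div_pos_iff.mp hy1 with ⟨h1', _⟩ | ⟨_, h2'⟩
      · exact h1'
      · linarith
    exact absurd (hneg y hy2) (not_lt.mpr this.le)
  -- second part: F' strictly decreasing on [0, astar]
  have hanti : StrictAntiOn F' (Icc 0 astar) := by
    refine strictAntiOn_of_deriv_neg (convex_Icc 0 astar) hcF' ?_
    intro x hx
    rw [interior_Icc] at hx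
    have hda : HasDerivAt F' (F'' x) x :=
      (hF2 x ⟨hx.1.le, hx.2.le⟩).hasDerivAt (Icc_mem_nhds hx.1 hx.2)
    rw [hda.deriv]
    exact key x ⟨hx.1.le, hx.2⟩
  intro x hx
  refine ⟨key x hx, ?_⟩
  have := hanti ⟨hx.1, hx.2.le⟩ hmem_astar hx.2
  rw [hFa1] at this
  exact this
end
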